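/- Let d ≥ 3. In the silo graph G_d, for any i, i' ∈ [d] there is a walk in the 'layered' auxiliary graph Γ (vertices (i,j) ∈ [d] × [rd], with edges from (i,j) to (i,j+1) always, and from (j mod d, j) to (i, j+1) whenever i ≢ j+1 mod d) from (i,1) to (i',j) of length exactly j-1, provided j ≥ d+3. -/

import Mathlib

/-- The representative in `{1,…,d}` of `z` modulo `d`. -/
def modRep (d z : ℕ) : ℕ := if z % d = 0 then d else z % d

/-- One directed step of the layered auxiliary graph `Γ`: from `(i,j)` to
`(i,j+1)` always, and from `(modRep d j, j)` to `(i', j+1)` whenever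
`i' ≠ modRep d (j+1)`. -/
def gammaStep (d : ℕ) (p q : ℕ × ℕ) : Prop :=
  q.2 = p.2 + 1 ∧
    (q.1 = p.1 ∨ (p.1 = modRep d p.2 ∧ q.1 ≠ modRep d (p.2 + 1)))

/-- Valid vertices of `Γ`: pairs in `[d] × [rd]`. -/
def gammaValid (d r : ℕ) (p : ℕ × ℕ) : Prop :=
  1 ≤ p.1 ∧ p.1 ≤ d ∧ 1 ≤ p.2 ∧ p.2 ≤ r * d

/-- The layered auxiliary graph `Γ`. -/
def gammaGraph (d r : ℕ) : SimpleGraph (ℕ × ℕ) where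
  Adj p q := gammaValid d r p ∧ gammaValid d r q ∧
    (gammaStep d p q ∨ gammaStep d q p)
  symm := ⟨fun p q h => ⟨h.2.1, h.1, h.2.2.symm⟩⟩
  loopless := ⟨by rintro p ⟨_, _, ⟨h, _⟩ | ⟨h, _⟩⟩ <;> omega⟩

/-! Below layer `i` stay in column `i`; since `modRep d i = i`, at layer `i` one may jump to any
column other than `modRep d (i + 1)`. If `i'` is that forbidden column, jump instead to
`c = modRep d (i + 2)` and, two layers higher, from `c` to `i'`; this second jump is allowed
because `i' = modRep d (i + 1) ≠ modRep d (i + 3)` when `d ≥ 3`. -/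

lemma modRep_mod (d z : ℕ) : modRep d z % d = z % d := by
  unfold modRep
  split_ifs with h
  · rw [Nat.mod_self, h]
  · exact Nat.mod_mod _ _

lemma modRep_mem_Icc (d z : ℕ) (hd : 0 < d) : 1 ≤ modRep d z ∧ modRep d z ≤ d := by
  unfold modRep
  split_ifs with h
  · omega
  · have := Nat.mod_lt z hd
    omega

lemma modRep_of_mem_Icc {d i : ℕ} (h1 : 1 ≤ i) (h2 : i ≤ d) : modRep d i = i := by
  unfold modRep
  rcases h2.lt_or_eq with h | rfl
  · rw [Nat.mod_eq_of_lt h, if_neg (by omega)]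
  · simp

lemma modRep_ne_modRep_add {d k : ℕ} (z : ℕ) (hk : 0 < k) (hkd : k < d) :
    modRep d z ≠ modRep d (z + k) := by
  intro h
  have hmod : z ≡ z + k [MOD d] := by
    rw [Nat.ModEq, ← modRep_mod d z, h, modRep_mod d _]
  have hdvd : d ∣ k := by simpa using (Nat.modEq_iff_dvd' (by omega)).mp hmod
  exact absurd (Nat.le_of_dvd hk hdvd) (by omega)

lemma gammaGraph_adj_up {d r c t : ℕ} (hc : 1 ≤ c ∧ c ≤ d) (ht : 1 ≤ t) (ht' : t + 1 ≤ r * d) :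
    (gammaGraph d r).Adj (c, t) (c, t + 1) :=
  ⟨⟨hc.1, hc.2, ht, by omega⟩, ⟨hc.1, hc.2, by omega, ht'⟩, .inl ⟨rfl, .inl rfl⟩⟩

lemma gammaGraph_adj_jump {d r c t : ℕ} (hd : 0 < d) (hc : 1 ≤ c ∧ c ≤ d)
    (hct : c ≠ modRep d (t + 1)) (ht : 1 ≤ t) (ht' : t + 1 ≤ r * d) :
    (gammaGraph d r).Adj (modRep d t, t) (c, t + 1) := by
  obtain ⟨h1, h2⟩ := modRep_mem_Icc d t hd
  exact ⟨⟨h1, h2, ht, by omega⟩, ⟨hc.1, hc.2, by omega, ht'⟩, .inl ⟨rfl, .inr ⟨rfl, hct⟩⟩⟩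

/-- As every edge of `Γ` changes the layer by one, this says that the walk climbs one layer
per step. -/
def LayerReach (d r : ℕ) (p q : ℕ × ℕ) : Prop :=
  ∃ w : (gammaGraph d r).Walk p q, p.2 + w.length = q.2

namespace LayerReach

variable {d r : ℕ} {p q s : ℕ × ℕ}

lemma refl (p : ℕ × ℕ) : LayerReach d r p p := ⟨.nil, rfl⟩

lemma of_adj (h : (gammaGraph d r).Adj p q) (hq : q.2 = p.2 + 1) : LayerReach d r p q :=
  ⟨h.toWalk, by simp [hq]⟩

lemma trans (hpq : LayerReach d r p q) (hqs : LayerReach d r q s) : LayerReach d r p s := by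
  obtain ⟨w, hw⟩ := hpq
  obtain ⟨w', hw'⟩ := hqs
  exact ⟨w.append w', by rw [SimpleGraph.Walk.length_append]; omega⟩

lemma vertical {c a b : ℕ} (hc : 1 ≤ c ∧ c ≤ d) (ha : 1 ≤ a) (hab : a ≤ b) (hb : b ≤ r * d) :
    LayerReach d r (c, a) (c, b) := by
  induction b, hab using Nat.le_induction with
  | base => exact refl _
  | succ b hab ih => exact (ih (by omega)).trans (of_adj (gammaGraph_adj_up hc (by omega) hb) rfl)

lemma jump {c c' a t b : ℕ} (hd : 0 < d) (hc : 1 ≤ c ∧ c ≤ d) (hc' : 1 ≤ c' ∧ c' ≤ d)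
    (hct : modRep d t = c) (hc't : c' ≠ modRep d (t + 1))
    (ha : 1 ≤ a) (hat : a ≤ t) (htb : t < b) (hb : b ≤ r * d) :
    LayerReach d r (c, a) (c', b) := by
  have hjump : LayerReach d r (c, t) (c', t + 1) :=
    of_adj (hct ▸ gammaGraph_adj_jump hd hc' hc't (by omega) (by omega)) rfl
  exact (vertical hc ha hat (by omega)).trans (hjump.trans (vertical hc' (by omega) htb hb))

end LayerReach

/-- for `d ≥ 3`, in the auxiliary graph `Γ` there is a walk from
`(i,1)` to `(i',j)` of length exactly `j - 1`, provided `d + 3 ≤ j ≤ rd`. -/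
theorem gamma_walk (d r : ℕ) (hd : 3 ≤ d) (i i' : ℕ)
    (hi : 1 ≤ i ∧ i ≤ d) (hi' : 1 ≤ i' ∧ i' ≤ d)
    (j : ℕ) (hj1 : d + 3 ≤ j) (hj2 : j ≤ r * d) :
    ∃ p : (gammaGraph d r).Walk (i, 1) (i', j), p.length = j - 1 := by
  suffices h : LayerReach d r (i, 1) (i', j) by
    obtain ⟨w, hw⟩ := h
    exact ⟨w, by simp only at hw; omega⟩
  have hii := modRep_of_mem_Icc (d := d) hi.1 hi.2
  by_cases hforbidden : i' = modRep d (i + 1)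
  · set c := modRep d (i + 2)
    have hc := modRep_mem_Icc d (i + 2) (by omega)
    have hc_ne : c ≠ modRep d (i + 1) := (modRep_ne_modRep_add (i + 1) one_pos (by omega)).symm
    have hi'_ne : i' ≠ modRep d (i + 2 + 1) :=
      hforbidden ▸ modRep_ne_modRep_add (i + 1) two_pos (by omega)
    have hto_c : LayerReach d r (i, 1) (c, i + 2) :=
      .jump (by omega) hi hc hii hc_ne le_rfl hi.1 (by omega) (by omega)
    have hfrom_c : LayerReach d r (c, i + 2) (i', j) :=
      .jump (by omega) hc hi' rfl hi'_ne (by omega) le_rfl (by omega) hj2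
    exact hto_c.trans hfrom_c
  · exact LayerReach.jump (by omega) hi hi' hii hforbidden le_rfl hi.1 (by omega) hj2
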